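/- Let N ∈ ℕ with N > 13δ. Then for every m ∈ ℕ, every ξ ∈ ∂Γ and every geodesic ray {x(n)}_{n≥0} ∈ [e,ξ], one has U(x(m)⁻¹ξ, N) ⊂ x(m)⁻¹ U(ξ, m). -/

import Mathlib

open Filter Topology MeasureTheory
open scoped ENNReal

namespace HarmonicBoundary

variable {Γ : Type} [Group Γ]

/-- Word length of `g` with respect to a generating set `S`. -/
noncomputable def wl (S : Set Γ) (g : Γ) : ℕ :=
  sInf {n : ℕ | ∃ w : List Γ, w.length = n ∧ (∀ x ∈ w, x ∈ S) ∧ w.prod = g}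

/-- Word metric `d(x,y) = |x⁻¹y|`. -/
noncomputable def wdist (S : Set Γ) (x y : Γ) : ℕ := wl S (x⁻¹ * y)

/-- Gromov product `(x|y)_z = (d(x,z)+d(y,z)-d(x,y))/2`. -/
noncomputable def gp (S : Set Γ) (z x y : Γ) : ℝ :=
  ((wdist S x z : ℝ) + (wdist S y z : ℝ) - (wdist S x y : ℝ)) / 2

/-- `S` is a finite symmetric generating set of `Γ`. -/
def IsGenSet (S : Set Γ) : Prop :=
  S.Finite ∧ (∀ s ∈ S, s⁻¹ ∈ S) ∧ Subgroup.closure S = ⊤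

/-- `Γ` is `δ`-hyperbolic with respect to the word metric of `S`:
`(x|y) ≥ min ((x|z), (y|z)) - δ` for all `x y z`. -/
def IsHyperbolic (S : Set Γ) (δ : ℝ) : Prop :=
  0 ≤ δ ∧ ∀ x y z : Γ, min (gp S 1 x z) (gp S 1 y z) - δ ≤ gp S 1 x y

/-- `Γ` is nonelementary: it has no cyclic subgroup of finite index. -/
def Nonelementary (Γ : Type) [Group Γ] : Prop :=
  ∀ g : Γ, (Subgroup.zpowers g).index = 0

/-- A sequence converges to infinity if `(x_i|x_j) → ∞`. -/
def ConvInf (S : Set Γ) (u : ℕ → Γ) : Prop :=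
  Tendsto (fun p : ℕ × ℕ => gp S 1 (u p.1) (u p.2)) atTop atTop

/-- Two sequences converging to infinity are equivalent if `(x_i|y_j) → ∞`. -/
def EquivSeq (S : Set Γ) (u v : ℕ → Γ) : Prop :=
  Tendsto (fun p : ℕ × ℕ => gp S 1 (u p.1) (v p.2)) atTop atTop

/-- An (abstract model of the) Gromov boundary of `Γ`: the points are exactly the
classes of sequences converging to infinity, modulo the equivalence `EquivSeq`,
together with the natural left action of `Γ`. -/
structure Boundary (Γ : Type) [Group Γ] (S : Set Γ) where
  pt : Type
  cls : (ℕ → Γ) → pt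
  cls_surj : ∀ ξ : pt, ∃ u : ℕ → Γ, ConvInf S u ∧ cls u = ξ
  cls_eq : ∀ u v : ℕ → Γ, ConvInf S u → ConvInf S v → (cls u = cls v ↔ EquivSeq S u v)
  smul : Γ → pt → pt
  smul_cls : ∀ (g : Γ) (u : ℕ → Γ), ConvInf S u → smul g (cls u) = cls fun n => g * u n

/-- Extension of the Gromov product to the boundary:
`(ξ|η) = sup liminf (x_i|y_j)` over sequences representing `ξ` and `η`,
as an extended nonnegative real. -/
noncomputable def bgp {S : Set Γ} (B : Boundary Γ S) (ξ η : B.pt) : ℝ≥0∞ :=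
  ⨆ (u : {u : ℕ → Γ // ConvInf S u ∧ B.cls u = ξ})
    (v : {v : ℕ → Γ // ConvInf S v ∧ B.cls v = η}),
    Filter.liminf (fun p : ℕ × ℕ => ENNReal.ofReal (gp S 1 (u.1 p.1) (v.1 p.2))) atTop

/-- Real-valued Gromov product on the boundary (finite for `ξ ≠ η`). -/
noncomputable def bgpR {S : Set Γ} (B : Boundary Γ S) (ξ η : B.pt) : ℝ := (bgp B ξ η).toReal

/-- The canonical topology of the Gromov boundary: a set is open iff around each of
its points it contains a basic neighbourhood `V_r(p) = {q | (q|p) > r}`. -/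
def btop {S : Set Γ} (B : Boundary Γ S) : TopologicalSpace B.pt where
  IsOpen O := ∀ p ∈ O, ∃ r : ℝ≥0∞, r ≠ ⊤ ∧ {q | r < bgp B q p} ⊆ O
  isOpen_univ := fun p _ => ⟨0, ENNReal.zero_ne_top, fun q _ => trivial⟩
  isOpen_inter := by
    intro A A' hA hA' p hp
    obtain ⟨r1, hr1, h1⟩ := hA p hp.1
    obtain ⟨r2, hr2, h2⟩ := hA' p hp.2
    refine ⟨max r1 r2, (max_lt hr1.lt_top hr2.lt_top).ne, fun q hq => ?_⟩
    have hq' : max r1 r2 < bgp B q p := hq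
    exact ⟨h1 (show r1 < bgp B q p from (le_max_left r1 r2).trans_lt hq'),
      h2 (show r2 < bgp B q p from (le_max_right r1 r2).trans_lt hq')⟩
  isOpen_sUnion := by
    intro s hs p hp
    obtain ⟨t, ht, hpt⟩ := hp
    obtain ⟨r, hr, hsub⟩ := hs t ht p hpt
    exact ⟨r, hr, fun q hq => ⟨t, ht, hsub hq⟩⟩

/-- The attracting fixed point `g⁺ = lim_n gⁿ` of an (infinite order) element. -/
def plusPt {S : Set Γ} (B : Boundary Γ S) (g : Γ) : B.pt := B.cls fun n => g ^ n

/-- The repelling fixed point `g⁻ = lim_n g⁻ⁿ` of an (infinite order) element. -/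
def minusPt {S : Set Γ} (B : Boundary Γ S) (g : Γ) : B.pt := B.cls fun n => g⁻¹ ^ n

/-- A geodesic ray starting at the identity. -/
def IsGeodesicRay (S : Set Γ) (x : ℕ → Γ) : Prop :=
  x 0 = 1 ∧ ∀ m n : ℕ, wdist S (x m) (x n) = Nat.dist m n

/-- A geodesic ray from `e` to the boundary point `ξ`, i.e. an element of `[e,ξ]`. -/
def RayTo {S : Set Γ} (B : Boundary Γ S) (x : ℕ → Γ) (ξ : B.pt) : Prop :=
  IsGeodesicRay S x ∧ ConvInf S x ∧ B.cls x = ξ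

/-- A geodesic segment from `x` to `y` (parametrized on `0,…,d(x,y)`),
i.e. an element of `[x,y]`. -/
def IsGeodesicSeg (S : Set Γ) (x y : Γ) (α : ℕ → Γ) : Prop :=
  α 0 = x ∧ α (wdist S x y) = y ∧
  ∀ m n : ℕ, m ≤ wdist S x y → n ≤ wdist S x y → wdist S (α m) (α n) = Nat.dist m n

/-- The boundary "cylinder" `U(ξ,R)`: all `η` such that for every pair of geodesic
rays `x ∈ [e,ξ]`, `y ∈ [e,η]` one has `lim_n (x(n)|y(n)) > R` (the sequence
`(x(n)|y(n))` is nondecreasing, so the limit exceeds `R` iff some term does). -/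
def Uset {S : Set Γ} (B : Boundary Γ S) (ξ : B.pt) (R : ℝ) : Set B.pt :=
  {η | ∀ x y : ℕ → Γ, RayTo B x ξ → RayTo B y η → ∃ n : ℕ, R < gp S 1 (x n) (y n)}

/-- `C_r(p) = {g | (g|e)_p > r}`. -/
def Cset (S : Set Γ) (p : Γ) (r : ℝ) : Set Γ := {g | r < gp S p g 1}

/-- The `R`-neighbourhood `N(α,R)` of a geodesic segment `α ∈ [x,y]`. -/
def segN (S : Set Γ) (x y : Γ) (α : ℕ → Γ) (R : ℝ) : Set Γ :=
  {g | ∃ i ≤ wdist S x y, (wdist S g (α i) : ℝ) ≤ R}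

/-- The `R`-neighbourhood `N(A,R)` of a subset `A ⊆ Γ`. -/
def setN (S : Set Γ) (A : Set Γ) (R : ℝ) : Set Γ :=
  {g | ∃ a ∈ A, (wdist S g a : ℝ) ≤ R}

/-- `μ` is a nondegenerate probability measure on `Γ` with support contained in `S`:
nonnegative, of total mass one, supported in `S`, and the semigroup generated by its
support is the whole of `Γ`. -/
structure IsRWMeasure (S : Set Γ) (μ : Γ → ℝ) : Prop where
  nonneg : ∀ g, 0 ≤ μ g
  support_subset : ∀ g, μ g ≠ 0 → g ∈ S
  total : ∑' g : Γ, μ g = 1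
  nondeg : ∀ g : Γ, ∃ l : List Γ, l ≠ [] ∧ (∀ x ∈ l, 0 < μ x) ∧ l.prod = g

open Classical in
/-- `n`-step transition probabilities `p⁽ⁿ⁾(x,y) = μ*ⁿ(x⁻¹y)` of the random walk. -/
noncomputable def ptrans (μ : Γ → ℝ) : ℕ → Γ → Γ → ℝ
  | 0 => fun x y => if x = y then 1 else 0
  | n + 1 => fun x y => ∑' z : Γ, ptrans μ n x z * μ (z⁻¹ * y)

/-- Green function `G(x,y) = Σ_n p⁽ⁿ⁾(x,y)`. -/
noncomputable def green (μ : Γ → ℝ) (x y : Γ) : ℝ := ∑' n : ℕ, ptrans μ n x y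

/-- `F(x,y) = G(x,y)/G(y,y)`, the probability that the walk from `x` ever hits `y`. -/
noncomputable def greenF (μ : Γ → ℝ) (x y : Γ) : ℝ := green μ x y / green μ y y

/-- The Martin kernel `K(x,y) = G(x,y)/G(e,y)`. -/
noncomputable def martinK (μ : Γ → ℝ) (x y : Γ) : ℝ := green μ x y / green μ 1 y

open Classical in
/-- Transition probabilities of the walk restricted to `Δ` (killed when leaving `Δ`). -/
noncomputable def ptransR (μ : Γ → ℝ) (Δ : Set Γ) : ℕ → Γ → Γ → ℝ
  | 0 => fun x y => if x = y ∧ x ∈ Δ then 1 else 0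
  | n + 1 => fun x y => if y ∈ Δ then ∑' z : Γ, ptransR μ Δ n x z * μ (z⁻¹ * y) else 0

/-- Green function `G_Δ` of the restricted walk. -/
noncomputable def greenR (μ : Γ → ℝ) (Δ : Set Γ) (x y : Γ) : ℝ := ∑' n : ℕ, ptransR μ Δ n x y

/-- `F_Δ(x,y) = G_Δ(x,y)/G_Δ(y,y)`. -/
noncomputable def greenFR (μ : Γ → ℝ) (Δ : Set Γ) (x y : Γ) : ℝ :=
  greenR μ Δ x y / greenR μ Δ y y

/-- Generating function `G_Δ(x,y|z) = Σ_n p_Δ⁽ⁿ⁾(x,y) zⁿ`. -/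
noncomputable def greenRZ (μ : Γ → ℝ) (Δ : Set Γ) (x y : Γ) (z : ℝ) : ℝ :=
  ∑' n : ℕ, ptransR μ Δ n x y * z ^ n

/-- Spectral radius `ρ(P) = lim_n p⁽ⁿ⁾(e,e)^{1/n}` of the walk. -/
noncomputable def specRad (μ : Γ → ℝ) : ℝ :=
  Filter.limsup (fun n : ℕ => (ptrans μ n 1 1) ^ ((n : ℝ)⁻¹)) atTop

/-- `u` is harmonic on `Λ`: `Σ_h p(g,h) u(h) = u(g)` for `g ∈ Λ`, `p(g,h)=μ(g⁻¹h)`. -/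
def HarmonicOn (μ : Γ → ℝ) (u : Γ → ℝ) (Λ : Set Γ) : Prop :=
  ∀ g ∈ Λ, (∑' h : Γ, μ (g⁻¹ * h) * u h) = u g

/-- `u` vanishes at infinity on `Λ`: `u(g_n) → 0` along sequences in `Λ` with `|g_n|→∞`. -/
def VanishesAtInftyOn (S : Set Γ) (u : Γ → ℝ) (Λ : Set Γ) : Prop :=
  ∀ ε : ℝ, 0 < ε → ∃ M : ℕ, ∀ g ∈ Λ, M ≤ wl S g → |u g| ≤ ε

open Classical in
/-- `r(g) = K(g⁻¹,g⁺)` for infinite order `g`, and `r(g) = 1` for finite order `g`;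
here `Kb` is the boundary extension of the Martin kernel. -/
noncomputable def rfun {S : Set Γ} (B : Boundary Γ S) (Kb : Γ → B.pt → ℝ) (g : Γ) : ℝ :=
  if IsOfFinOrder g then 1 else Kb g⁻¹ (plusPt B g)

/-- The ratio set `r(Γ,∂Γ,ν)`: all `l ≥ 0` such that for every `ε > 0` and every
Borel `A` of positive measure there is `g ∈ Γ` such that
`{ω ∈ gA ∩ A : |d(gν)/dν(ω) − l| < ε}` has positive measure; here the
Radon–Nikodym derivative `d(gν)/dν` is the Martin kernel `Kb g`. -/
def ratioSet {S : Set Γ} (B : Boundary Γ S) [MeasurableSpace B.pt]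
    (ν : Measure B.pt) (Kb : Γ → B.pt → ℝ) : Set ℝ :=
  {l : ℝ | 0 ≤ l ∧ ∀ ε : ℝ, 0 < ε → ∀ A : Set B.pt, MeasurableSet A → 0 < ν A →
    ∃ g : Γ, 0 < ν {ω | ω ∈ A ∧ B.smul g⁻¹ ω ∈ A ∧ |Kb g ω - l| < ε}}

/-- A left invariant finitely additive mean on `Γ`; `Γ` is amenable iff one exists. -/
structure InvariantMean (Γ : Type) [Group Γ] where
  m : Set Γ → ℝ
  nonneg : ∀ A, 0 ≤ m A
  total : m Set.univ = 1
  fin_add : ∀ A B : Set Γ, Disjoint A B → m (A ∪ B) = m A + m B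
  invariant : ∀ (g : Γ) (A : Set Γ), m ((g * ·) ⁻¹' A) = m A


/-!
Put `g = x(m)`. The translate `g⁻¹x` is a geodesic through `g⁻¹` and `e`, so `a(j) = g⁻¹x(m+j)`
is a ray from `e` to `g⁻¹ξ` with `(g⁻¹|a(j)) = 0`. If `η ∈ U(g⁻¹ξ, N)` and `b` is a ray to `η`,
then `(a(j)|b(j)) > N > δ` for large `j`, so `b` cannot head back towards `g⁻¹`:
`(g⁻¹|b(j)) ≤ δ`. Translating back by `g` therefore gives `(x(m+j)|g b(j)) ≥ m + N - δ`, and two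
more applications of hyperbolicity pass this bound, up to `2δ`, to arbitrary rays to `ξ` and to
`gη`; `N > 3δ` leaves more than `m`. Rays to boundary points are produced by a König argument
on geodesic segments from `e`.
-/

section WordMetric

variable {S : Set Γ}

lemma exists_list_prod_eq (hS : IsGenSet S) (g : Γ) :
    ∃ w : List Γ, (∀ x ∈ w, x ∈ S) ∧ w.prod = g := by
  have hsymm : S ∪ S⁻¹ = S :=
    Set.union_eq_left.2 fun s hs => by simpa using hS.2.1 _ (Set.mem_inv.1 hs)
  apply Submonoid.exists_list_of_mem_closure
  rw [← hsymm, ← Subgroup.closure_toSubmonoid, hS.2.2]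
  exact Subgroup.mem_top g

lemma exists_list_length_eq_wl (hS : IsGenSet S) (g : Γ) :
    ∃ w : List Γ, w.length = wl S g ∧ (∀ x ∈ w, x ∈ S) ∧ w.prod = g := by
  obtain ⟨w, hw, hg⟩ := exists_list_prod_eq hS g
  exact Nat.sInf_mem (s := {n | ∃ w : List Γ, w.length = n ∧ (∀ x ∈ w, x ∈ S) ∧ w.prod = g})
    ⟨w.length, w, rfl, hw, hg⟩

lemma wl_prod_le_length {w : List Γ} (hw : ∀ x ∈ w, x ∈ S) : wl S w.prod ≤ w.length :=
  Nat.sInf_le ⟨w, rfl, hw, rfl⟩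

@[simp]
lemma wl_one : wl S (1 : Γ) = 0 :=
  Nat.le_zero.1 (wl_prod_le_length (w := []) (by simp))

lemma wl_mul_le (hS : IsGenSet S) (g h : Γ) : wl S (g * h) ≤ wl S g + wl S h := by
  obtain ⟨v, hv, hvS, rfl⟩ := exists_list_length_eq_wl hS g
  obtain ⟨w, hw, hwS, rfl⟩ := exists_list_length_eq_wl hS h
  rw [← hv, ← hw, ← List.length_append, ← List.prod_append]
  exact wl_prod_le_length fun x hx => (List.mem_append.1 hx).elim (hvS x) (hwS x)

lemma wl_inv_le (hS : IsGenSet S) (g : Γ) : wl S g⁻¹ ≤ wl S g := by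
  obtain ⟨w, hw, hwS, rfl⟩ := exists_list_length_eq_wl hS g
  rw [← hw, List.prod_inv_reverse, ← List.length_map (f := (·⁻¹)), ← List.length_reverse]
  refine wl_prod_le_length fun x hx => ?_
  obtain ⟨y, hy, rfl⟩ := List.mem_map.1 (List.mem_reverse.1 hx)
  exact hS.2.1 y (hwS y hy)

@[simp]
lemma wl_inv (hS : IsGenSet S) (g : Γ) : wl S g⁻¹ = wl S g :=
  le_antisymm (wl_inv_le hS g) (by simpa using wl_inv_le hS g⁻¹)

lemma finite_setOf_wl_le (hS : IsGenSet S) (k : ℕ) : {g : Γ | wl S g ≤ k}.Finite := by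
  have : Finite S := hS.1.to_subtype
  refine ((List.finite_length_le S k).image fun w => (w.map Subtype.val).prod).subset ?_
  intro g hg
  obtain ⟨w, hw, hwS, rfl⟩ := exists_list_length_eq_wl hS g
  lift w to List S using hwS
  refine ⟨w, ?_, rfl⟩
  show w.length ≤ k
  rw [← List.length_map (f := Subtype.val), hw]
  exact hg

@[simp]
lemma wdist_self (x : Γ) : wdist S x x = 0 := by
  simp [wdist]

@[simp]
lemma wdist_one_left (x : Γ) : wdist S 1 x = wl S x := by
  simp [wdist]

lemma wdist_comm (hS : IsGenSet S) (x y : Γ) : wdist S x y = wdist S y x := by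
  rw [wdist, ← wl_inv hS, mul_inv_rev, inv_inv, wdist]

lemma wdist_one_right (hS : IsGenSet S) (x : Γ) : wdist S x 1 = wl S x := by
  rw [wdist_comm hS, wdist_one_left]

lemma wdist_triangle (hS : IsGenSet S) (x y z : Γ) :
    wdist S x z ≤ wdist S x y + wdist S y z := by
  have : x⁻¹ * z = (x⁻¹ * y) * (y⁻¹ * z) := by group
  rw [wdist, wdist, wdist, this]
  exact wl_mul_le hS _ _

@[simp]
lemma wdist_mul_left (g x y : Γ) : wdist S (g * x) (g * y) = wdist S x y := by
  simp [wdist, mul_assoc]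

lemma gp_one_eq (hS : IsGenSet S) (x y : Γ) :
    gp S 1 x y = ((wl S x : ℝ) + wl S y - wdist S x y) / 2 := by
  rw [gp, wdist_one_right hS, wdist_one_right hS]

lemma gp_comm (hS : IsGenSet S) (x y : Γ) : gp S 1 x y = gp S 1 y x := by
  rw [gp_one_eq hS, gp_one_eq hS, wdist_comm hS x y, add_comm (wl S x : ℝ)]

lemma gp_le_wl (hS : IsGenSet S) (x y : Γ) : gp S 1 x y ≤ wl S x := by
  have : (wl S y : ℝ) ≤ wl S x + wdist S x y := by
    exact_mod_cast (by simpa using wdist_triangle hS 1 x y)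
  rw [gp_one_eq hS]
  linarith

lemma gp_mul_left (hS : IsGenSet S) (g a b : Γ) :
    gp S 1 (g * a) (g * b) = gp S 1 a b + wl S g - gp S 1 g⁻¹ a - gp S 1 g⁻¹ b := by
  have hd : ∀ c : Γ, wdist S g⁻¹ c = wl S (g * c) := fun c => by simp [wdist]
  simp only [gp_one_eq hS, wdist_mul_left, hd, wl_inv hS]
  ring

end WordMetric

section Sequences

variable {S : Set Γ}

lemma ConvInf.tendsto_wl (hS : IsGenSet S) {u : ℕ → Γ} (hu : ConvInf S u) :
    Tendsto (fun n => wl S (u n)) atTop atTop := by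
  refine tendsto_natCast_atTop_iff.1 ((hu.comp tendsto_atTop_diagonal).congr fun n => ?_)
  simp only [Function.comp, gp_one_eq hS, wdist_self]
  push_cast
  ring

lemma ConvInf.shift {u : ℕ → Γ} (hu : ConvInf S u) (k : ℕ) : ConvInf S fun j => u (k + j) :=
  hu.comp (f := fun p : ℕ × ℕ => (k + p.1, k + p.2)) <|
    tendsto_atTop_atTop.2 fun p => ⟨p, fun q hq => ⟨hq.1.trans (by omega), hq.2.trans (by omega)⟩⟩

lemma ConvInf.equivSeq_shift {u : ℕ → Γ} (hu : ConvInf S u) (k : ℕ) :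
    EquivSeq S (fun j => u (k + j)) u :=
  hu.comp (f := fun p : ℕ × ℕ => (k + p.1, p.2)) <|
    tendsto_atTop_atTop.2 fun p => ⟨p, fun q hq => ⟨hq.1.trans (by omega), hq.2⟩⟩

lemma ConvInf.mul_left (hS : IsGenSet S) {u : ℕ → Γ} (hu : ConvInf S u) (g : Γ) :
    ConvInf S fun n => g * u n := by
  refine tendsto_atTop_mono (fun p => ?_) (tendsto_atTop_add_const_right _ (-(wl S g : ℝ)) hu)
  have h₁ := gp_le_wl hS g⁻¹ (u p.1)
  have h₂ := gp_le_wl hS g⁻¹ (u p.2)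
  rw [wl_inv hS] at h₁ h₂
  rw [gp_mul_left hS]
  linarith

lemma Boundary.cls_shift (B : Boundary Γ S) {u : ℕ → Γ} (hu : ConvInf S u) (k : ℕ) :
    B.cls (fun j => u (k + j)) = B.cls u :=
  (B.cls_eq _ _ (hu.shift k) hu).2 (hu.equivSeq_shift k)

lemma Boundary.smul_inv_smul (hS : IsGenSet S) (B : Boundary Γ S) (g : Γ) (η : B.pt) :
    B.smul g⁻¹ (B.smul g η) = η := by
  obtain ⟨u, hu, rfl⟩ := B.cls_surj η
  rw [B.smul_cls g u hu, B.smul_cls g⁻¹ _ (hu.mul_left hS g)]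
  simp

end Sequences

section Rays

variable {S : Set Γ}

namespace IsGeodesicRay

variable {x y : ℕ → Γ}

lemma wl_eq (hx : IsGeodesicRay S x) (n : ℕ) : wl S (x n) = n := by
  simpa [hx.1, Nat.dist_zero_left] using hx.2 0 n

lemma gp_eq_min (hS : IsGenSet S) (hx : IsGeodesicRay S x) (i j : ℕ) :
    gp S 1 (x i) (x j) = min (i : ℝ) j := by
  rw [gp_one_eq hS, hx.wl_eq, hx.wl_eq, hx.2 i j]
  rcases le_total i j with h | h
  · rw [Nat.dist_eq_sub_of_le h, min_eq_left (Nat.cast_le.2 h), Nat.cast_sub h]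
    ring
  · rw [Nat.dist_eq_sub_of_le_right h, min_eq_right (Nat.cast_le.2 h), Nat.cast_sub h]
    ring

lemma convInf (hS : IsGenSet S) (hx : IsGeodesicRay S x) : ConvInf S x := by
  have hmin : Tendsto (fun p : ℕ × ℕ => min p.1 p.2) atTop atTop :=
    tendsto_atTop_atTop.2 fun n => ⟨(n, n), fun p hp => le_min hp.1 hp.2⟩
  refine (tendsto_natCast_atTop_atTop.comp hmin).congr fun p => ?_
  simp [hx.gp_eq_min hS]

lemma monotone_gp (hS : IsGenSet S) (hx : IsGeodesicRay S x) (hy : IsGeodesicRay S y) :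
    Monotone fun n => gp S 1 (x n) (y n) := by
  refine monotone_nat_of_le_succ fun n => ?_
  have hd : (wdist S (x (n + 1)) (y (n + 1)) : ℝ) ≤ wdist S (x n) (y n) + 2 := by
    have h₁ := wdist_triangle hS (x (n + 1)) (x n) (y (n + 1))
    have h₂ := wdist_triangle hS (x n) (y n) (y (n + 1))
    rw [hx.2, Nat.dist_eq_sub_of_le_right (Nat.le_succ n)] at h₁
    rw [hy.2, Nat.dist_eq_sub_of_le (Nat.le_succ n)] at h₂
    exact_mod_cast (by omega : wdist S (x (n + 1)) (y (n + 1)) ≤ wdist S (x n) (y n) + 2)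
  simp only [gp_one_eq hS, hx.wl_eq, hy.wl_eq]
  push_cast
  linarith

lemma shift (hx : IsGeodesicRay S x) (m : ℕ) :
    IsGeodesicRay S fun j => (x m)⁻¹ * x (m + j) :=
  ⟨by simp, fun i j => by rw [wdist_mul_left, hx.2, Nat.dist_add_add_left]⟩

lemma gp_inv_shift_eq_zero (hS : IsGenSet S) (hx : IsGeodesicRay S x) (m j : ℕ) :
    gp S 1 (x m)⁻¹ ((x m)⁻¹ * x (m + j)) = 0 := by
  have hd : wdist S (x m)⁻¹ ((x m)⁻¹ * x (m + j)) = m + j := by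
    simp [wdist, hx.wl_eq]
  rw [gp_one_eq hS, hd, wl_inv hS, hx.wl_eq, (hx.shift m).wl_eq]
  push_cast
  ring

end IsGeodesicRay

lemma RayTo.shift (hS : IsGenSet S) {B : Boundary Γ S} {x : ℕ → Γ} {ξ : B.pt}
    (hx : RayTo B x ξ) (m : ℕ) :
    RayTo B (fun j => (x m)⁻¹ * x (m + j)) (B.smul (x m)⁻¹ ξ) := by
  refine ⟨hx.1.shift m, (hx.1.shift m).convInf hS, ?_⟩
  rw [← hx.2.2, ← B.cls_shift hx.2.1 m, B.smul_cls _ _ (hx.2.1.shift m)]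

end Rays

section Segments

variable {S : Set Γ}

lemma wdist_take_prod_le {w : List Γ} (hw : ∀ x ∈ w, x ∈ S) {i j : ℕ} (hij : i ≤ j) :
    wdist S (w.take i).prod (w.take j).prod ≤ j - i := by
  obtain ⟨k, rfl⟩ := Nat.exists_eq_add_of_le hij
  rw [wdist, List.take_add, List.prod_append, inv_mul_cancel_left]
  have hsub : ∀ x ∈ (w.drop i).take k, x ∈ S := fun x hx =>
    hw x (List.mem_of_mem_drop (List.mem_of_mem_take hx))
  exact (wl_prod_le_length hsub).trans (by simp)

lemma exists_isGeodesicSeg_one (hS : IsGenSet S) (h : Γ) :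
    ∃ σ : ℕ → Γ, IsGeodesicSeg S 1 h σ := by
  obtain ⟨w, hlen, hw, rfl⟩ := exists_list_length_eq_wl hS h
  refine ⟨fun k => (w.take k).prod, by simp, by simp [← hlen], fun i j hi hj => ?_⟩
  rw [wdist_one_left, ← hlen] at hi hj
  show wdist S (w.take i).prod (w.take j).prod = Nat.dist i j
  wlog hij : i ≤ j generalizing i j
  · rw [wdist_comm hS, Nat.dist_comm]
    exact this j i hj hi (le_of_not_ge hij)
  rw [Nat.dist_eq_sub_of_le hij]
  refine le_antisymm (wdist_take_prod_le hw hij) ?_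
  have h₀ := wdist_take_prod_le hw (Nat.zero_le i)
  have h₁ := wdist_take_prod_le hw hj
  have h₂ := wdist_triangle hS 1 (w.take i).prod (w.take j).prod
  have h₃ := wdist_triangle hS 1 (w.take j).prod (w.take w.length).prod
  simp only [List.take_zero, List.prod_nil, List.take_length, wdist_one_left] at h₀ h₁ h₂ h₃
  omega

namespace IsGeodesicSeg

variable {h : Γ} {σ : ℕ → Γ}

lemma wdist_eq (hσ : IsGeodesicSeg S 1 h σ) {i j : ℕ} (hi : i ≤ wl S h) (hj : j ≤ wl S h) :
    wdist S (σ i) (σ j) = Nat.dist i j :=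
  hσ.2.2 i j (by rwa [wdist_one_left]) (by rwa [wdist_one_left])

lemma wl_eq (hσ : IsGeodesicSeg S 1 h σ) {k : ℕ} (hk : k ≤ wl S h) : wl S (σ k) = k := by
  simpa [hσ.1, Nat.dist_zero_left] using hσ.wdist_eq (Nat.zero_le _) hk

lemma gp_eq (hS : IsGenSet S) (hσ : IsGeodesicSeg S 1 h σ) {k : ℕ} (hk : k ≤ wl S h) :
    gp S 1 (σ k) h = k := by
  have hσh : σ (wl S h) = h := by simpa using hσ.2.1
  have hd := hσ.wdist_eq hk le_rfl
  rw [hσh, Nat.dist_eq_sub_of_le hk] at hd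
  rw [gp_one_eq hS, hσ.wl_eq hk, hd, Nat.cast_sub hk]
  ring

end IsGeodesicSeg

end Segments

/-- König's lemma. -/
lemma exists_frequently_forall_eq {α : Type*} (σ : ℕ → ℕ → α) (s : ℕ → Set α)
    (hs : ∀ k, (s k).Finite) (hσ : ∀ k, ∀ᶠ n in atTop, σ n k ∈ s k) :
    ∃ b : ℕ → α, ∀ k, ∃ᶠ n in atTop, ∀ i ≤ k, σ n i = b i := by
  let 𝒰 : Ultrafilter ℕ := hyperfilter ℕ
  have h𝒰 : (𝒰 : Filter ℕ) ≤ atTop := Nat.cofinite_eq_atTop ▸ hyperfilter_le_cofinite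
  have hpt : ∀ k, ∃ a, ∀ᶠ n in (𝒰 : Filter ℕ), σ n k = a := fun k => by
    obtain ⟨a, -, ha⟩ := Ultrafilter.eq_pure_of_finite_mem (f := 𝒰.map (σ · k)) (hs k)
      (Ultrafilter.mem_map.2 (h𝒰 (hσ k)))
    exact ⟨a, Ultrafilter.mem_map.1 (ha ▸ Set.mem_singleton a :
      ({a} : Set α) ∈ 𝒰.map (σ · k))⟩
  choose b hb using hpt
  refine ⟨b, fun k => Frequently.filter_mono ?_ h𝒰⟩
  exact ((Set.finite_Iic k).eventually_all.2 fun i _ => hb i).frequently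

section ExistenceOfRays

variable {S : Set Γ} {δ : ℝ}

lemma exists_isGeodesicRay_equivSeq (hS : IsGenSet S) (hδ : IsHyperbolic S δ) {u : ℕ → Γ}
    (hu : ConvInf S u) : ∃ b : ℕ → Γ, IsGeodesicRay S b ∧ EquivSeq S b u := by
  choose σ hσ using fun n => exists_isGeodesicSeg_one hS (u n)
  have hL := hu.tendsto_wl hS
  obtain ⟨b, hb⟩ := exists_frequently_forall_eq σ (fun k => {g | wl S g ≤ k})
    (finite_setOf_wl_le hS) fun k =>
      (hL.eventually_ge_atTop k).mono fun n hn => ((hσ n).wl_eq hn).le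
  have hagree : ∀ k M, ∃ n ≥ M, k ≤ wl S (u n) ∧ ∀ i ≤ k, σ n i = b i := fun k M =>
    let ⟨n, hn, hM, hk⟩ :=
      ((hb k).and_eventually ((eventually_ge_atTop M).and (hL.eventually_ge_atTop k))).exists
    ⟨n, hM, hk, hn⟩
  have hray : IsGeodesicRay S b := by
    refine ⟨?_, fun i j => ?_⟩
    · obtain ⟨n, -, -, hn⟩ := hagree 0 0
      rw [← hn 0 le_rfl, (hσ n).1]
    · obtain ⟨n, -, hk, hn⟩ := hagree (max i j) 0
      rw [← hn i (le_max_left i j), ← hn j (le_max_right i j)]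
      exact (hσ n).wdist_eq ((le_max_left i j).trans hk) ((le_max_right i j).trans hk)
  refine ⟨b, hray, tendsto_atTop.2 fun C => ?_⟩
  obtain ⟨⟨M₁, M₂⟩, hM⟩ := eventually_atTop.1 (hu.eventually_ge_atTop (C + δ))
  refine eventually_atTop.2 ⟨(⌈C + δ⌉₊, M₁), fun ⟨k, q⟩ ⟨hk, hq⟩ => ?_⟩
  obtain ⟨n, hn, hkn, hσb⟩ := hagree k M₂
  have hbu : gp S 1 (b k) (u n) = k := hσb k le_rfl ▸ (hσ n).gp_eq hS hkn
  have hqn := hM (q, n) ⟨hq, hn⟩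
  have hCk : C + δ ≤ k := (Nat.le_ceil _).trans (Nat.cast_le.2 hk)
  have := hδ.2 (b k) (u q) (u n)
  rw [hbu] at this
  linarith [le_min hCk hqn]

lemma exists_rayTo (hS : IsGenSet S) (hδ : IsHyperbolic S δ) (B : Boundary Γ S) (η : B.pt) :
    ∃ b : ℕ → Γ, RayTo B b η := by
  obtain ⟨u, hu, rfl⟩ := B.cls_surj η
  obtain ⟨b, hb, hbu⟩ := exists_isGeodesicRay_equivSeq hS hδ hu
  exact ⟨b, hb, hb.convInf hS, (B.cls_eq b u (hb.convInf hS) hu).2 hbu⟩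

end ExistenceOfRays

namespace IsHyperbolic

variable {S : Set Γ} {δ : ℝ}

lemma le_gp_mul_left (hS : IsGenSet S) (hδ : IsHyperbolic S δ) {g a b : Γ}
    (ha : gp S 1 g⁻¹ a = 0) (hab : δ < gp S 1 a b) :
    gp S 1 a b + wl S g - δ ≤ gp S 1 (g * a) (g * b) := by
  have hmin := hδ.2 g⁻¹ a b
  rw [ha] at hmin
  have hb : gp S 1 g⁻¹ b ≤ δ := by
    by_contra! h
    linarith [lt_min h hab]
  rw [gp_mul_left hS, ha]
  linarith

lemma eventually_le_gp_of_equivSeq (hS : IsGenSet S) (hδ : IsHyperbolic S δ)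
    {u u' v v' : ℕ → Γ} {C : ℝ} (hu : EquivSeq S u' u) (hv : EquivSeq S v v')
    (huv : ∀ᶠ j in atTop, C ≤ gp S 1 (u j) (v j)) :
    ∀ᶠ n in atTop, C - 2 * δ ≤ gp S 1 (u' n) (v' n) := by
  obtain ⟨⟨M₁, M₂⟩, hM⟩ := eventually_atTop.1 (hu.eventually_ge_atTop C)
  obtain ⟨⟨M₃, M₄⟩, hM'⟩ := eventually_atTop.1 (hv.eventually_ge_atTop C)
  obtain ⟨j, hj, hj₂, hj₃⟩ :=
    (huv.and ((eventually_ge_atTop M₂).and (eventually_ge_atTop M₃))).exists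
  filter_upwards [eventually_ge_atTop M₁, eventually_ge_atTop M₄] with n hn₁ hn₄
  have hu'u : C ≤ gp S 1 (u' n) (u j) := hM (n, j) ⟨hn₁, hj₂⟩
  have hvv' : C ≤ gp S 1 (v j) (v' n) := hM' (j, n) ⟨hj₃, hn₄⟩
  have h₁ := hδ.2 (u j) (v' n) (v j)
  have h₂ := hδ.2 (u' n) (v' n) (u j)
  rw [gp_comm hS (v' n)] at h₁ h₂
  have huv' : C - δ ≤ gp S 1 (u j) (v' n) := by linarith [le_min hj hvv']
  linarith [le_min (by linarith [hδ.1] : C - δ ≤ gp S 1 (u' n) (u j)) huv']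

end IsHyperbolic

theorem cylinder_translation_general
    (Γ : Type) [Group Γ] (S : Set Γ) (δ : ℝ)
    (hS : IsGenSet S) (hδ : IsHyperbolic S δ)
    (B : Boundary Γ S)
    (N : ℕ) (hN : 13 * δ < (N : ℝ)) :
    ∀ (m : ℕ) (ξ : B.pt) (x : ℕ → Γ), RayTo B x ξ →
      Uset B (B.smul (x m)⁻¹ ξ) (N : ℝ) ⊆ (B.smul (x m)⁻¹) '' Uset B ξ (m : ℝ) := by
  intro m ξ x hx η hη
  obtain ⟨b, hb⟩ := exists_rayTo hS hδ B η
  refine ⟨B.smul (x m) η, fun x' y' hx' hy' => ?_, B.smul_inv_smul hS _ _⟩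
  have hxm := hx.shift hS m
  obtain ⟨n₀, hn₀⟩ := hη _ b hxm hb
  have hclose : ∀ᶠ j in atTop, (m + N - δ : ℝ) ≤ gp S 1 (x (m + j)) (x m * b j) := by
    filter_upwards [eventually_ge_atTop n₀] with j hj
    have hN_lt : (N : ℝ) < gp S 1 ((x m)⁻¹ * x (m + j)) (b j) :=
      hn₀.trans_le (hxm.1.monotone_gp hS hb.1 hj)
    have := hδ.le_gp_mul_left hS (hx.1.gp_inv_shift_eq_zero hS m j) (b := b j)
      (by linarith [hδ.1])
    rw [mul_inv_cancel_left, hx.1.wl_eq] at this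
    linarith
  have hx'x : EquivSeq S x' fun j => x (m + j) :=
    (B.cls_eq _ _ hx'.2.1 (hx.2.1.shift m)).1 (by rw [B.cls_shift hx.2.1, hx'.2.2, hx.2.2])
  have hby' : EquivSeq S (fun j => x m * b j) y' :=
    (B.cls_eq _ _ (hb.2.1.mul_left hS _) hy'.2.1).1
      (by rw [← B.smul_cls _ _ hb.2.1, hb.2.2, hy'.2.2])
  obtain ⟨n, hn⟩ := (hδ.eventually_le_gp_of_equivSeq hS hx'x hby' hclose).exists
  exact ⟨n, by linarith [hδ.1]⟩

theorem cylinder_translation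
    (Γ : Type) [Group Γ] (S : Set Γ) (δ : ℝ)
    (hS : IsGenSet S) (hδ : IsHyperbolic S δ) (hne : Nonelementary Γ)
    (B : Boundary Γ S)
    (N : ℕ) (hN : 13 * δ < (N : ℝ)) :
    ∀ (m : ℕ) (ξ : B.pt) (x : ℕ → Γ), RayTo B x ξ →
      Uset B (B.smul (x m)⁻¹ ξ) (N : ℝ) ⊆ (B.smul (x m)⁻¹) '' Uset B ξ (m : ℝ) :=
  cylinder_translation_general Γ S δ hS hδ B N hN

end HarmonicBoundary
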